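/- arXiv:2301.13159 — 2 statements merged into one kernel-verified Lean document; each statement's English description precedes it below -/
import Mathlib

section
/- With 𝓛' as the block circulant supra-Laplacian with diagonal blocks L + 2ωI and off-diagonal/corner blocks −ωI (L symmetric PSD with one-dimensional kernel, ω > 0), the smallest eigenvalue of 𝓛' is 0, it is simple, and its eigenspace is spanned by the vector whose every block equals the kernel vector v₀ of L. -/
/-!
Summation by parts on the cycle `ℤ/T` turns the quadratic form of `𝓛'` into
`xᵀ 𝓛' x = ∑ₜ xₜᵀ L xₜ + ω ∑ₜ ‖xₜ - xₜ₊₁‖²`, a sum of nonnegative terms. Hence `𝓛'` is positive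
semidefinite, and `𝓛' x = 0` forces every block `xₜ` into `ker L` and all blocks to agree, so
`ker 𝓛'` is the image of `ker L = span {v₀}` under `v ↦ (v, …, v)`.
-/

open Matrix Real

def blockCirc {T N : ℕ} [NeZero T] (L W : Matrix (Fin N) (Fin N) ℝ) :
    Matrix (Fin T × Fin N) (Fin T × Fin N) ℝ :=
  fun p q =>
    if p.1 = q.1 then L p.2 q.2
    else if q.1 = p.1 + 1 ∨ q.1 = p.1 - 1 then W p.2 q.2 else 0

open scoped Fin.CommRing

namespace Fin

variable {T : ℕ} [NeZero T]

lemma one_ne_zero_of_two_le (hT : 2 ≤ T) : (1 : Fin T) ≠ 0 := by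
  rw [Ne, ← Nat.cast_one, natCast_eq_zero]
  exact Nat.not_dvd_of_pos_of_lt Nat.one_pos (by omega)

lemma add_one_ne_sub_one (hT : 3 ≤ T) (t : Fin T) : t + 1 ≠ t - 1 := by
  rw [Ne, ← sub_eq_zero, add_sub_sub_cancel, one_add_one_eq_two, ← Nat.cast_two, natCast_eq_zero]
  exact Nat.not_dvd_of_pos_of_lt Nat.two_pos (by omega)

lemma apply_eq_apply_zero_of_apply_add_one {α : Type*} {f : Fin T → α}
    (hf : ∀ t, f t = f (t + 1)) (t : Fin T) : f t = f 0 := by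
  suffices ∀ k : ℕ, f k = f 0 by simpa using this t
  intro k
  induction k with
  | zero => simp
  | succ k ih => rw [Nat.cast_succ, ← hf, ih]

end Fin

section BlockCirculant

variable {T N : ℕ} [NeZero T]

lemma blockCirc_transpose (L W : Matrix (Fin N) (Fin N) ℝ) :
    (blockCirc (T := T) L W)ᵀ = blockCirc Lᵀ Wᵀ := by
  ext p q
  have : (p.1 = q.1 + 1 ∨ p.1 = q.1 - 1) ↔ (q.1 = p.1 + 1 ∨ q.1 = p.1 - 1) := by
    rw [eq_sub_iff_add_eq, eq_sub_iff_add_eq, eq_comm (a := p.1), eq_comm (a := q.1), or_comm]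
  simp only [transpose_apply, blockCirc, eq_comm (a := q.1), this]

lemma blockCirc_apply_of_three_le (hT : 3 ≤ T) (L W : Matrix (Fin N) (Fin N) ℝ)
    (t s : Fin T) (n m : Fin N) :
    blockCirc L W (t, n) (s, m) =
      (if s = t then L n m else 0) + (if s = t + 1 then W n m else 0) +
        (if s = t - 1 then W n m else 0) := by
  -- for `T ≥ 3` the blocks `t`, `t + 1` and `t - 1` are distinct, so the three terms never overlap
  have h₀ := Fin.one_ne_zero_of_two_le (T := T) (by omega)
  have h₁ : t + 1 ≠ t := by simpa using h₀
  have h₂ : t - 1 ≠ t := by simpa using h₀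
  have h₃ := Fin.add_one_ne_sub_one hT t
  simp only [blockCirc]
  rcases eq_or_ne s t with rfl | hst
  · simp [h₁.symm, h₂.symm]
  rcases eq_or_ne s (t + 1) with rfl | hs₁
  · simp [h₁, h₃, h₁.symm]
  rcases eq_or_ne s (t - 1) with rfl | hs₂
  · simp [h₂, h₃.symm, h₂.symm]
  simp [hst, hs₁, hs₂, Ne.symm hst]

lemma curry_blockCirc_mulVec (hT : 3 ≤ T) (L W : Matrix (Fin N) (Fin N) ℝ)
    (x : Fin T × Fin N → ℝ) (t : Fin T) :
    Function.curry (blockCirc L W *ᵥ x) t =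
      L *ᵥ Function.curry x t + W *ᵥ Function.curry x (t + 1) + W *ᵥ Function.curry x (t - 1) := by
  ext n
  simp only [Function.curry_apply, mulVec, dotProduct, Fintype.sum_prod_type_right,
    blockCirc_apply_of_three_le hT, add_mul, ite_mul, zero_mul, Finset.sum_add_distrib,
    Finset.sum_ite_eq', Finset.mem_univ, if_true, Pi.add_apply]

end BlockCirculant

lemma dotProduct_self_nonneg {n R : Type*} [Fintype n] [Ring R] [LinearOrder R]
    [IsStrictOrderedRing R] (v : n → R) : 0 ≤ v ⬝ᵥ v :=
  Finset.sum_nonneg fun i _ => mul_self_nonneg (v i)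

lemma sum_dotProduct_two_smul_sub_sub {G n R : Type*} [AddGroup G] [Fintype G] [Fintype n]
    [CommRing R] (f : G → n → R) (a : G) :
    ∑ g, f g ⬝ᵥ (2 • f g - f (g + a) - f (g - a)) =
      ∑ g, (f g - f (g + a)) ⬝ᵥ (f g - f (g + a)) := by
  have h₁ : ∑ g, f g ⬝ᵥ f (g - a) = ∑ g, f g ⬝ᵥ f (g + a) := by
    rw [← Equiv.sum_comp (Equiv.addRight a)]
    simp [dotProduct_comm]
  have h₂ : ∑ g, f (g + a) ⬝ᵥ f (g + a) = ∑ g, f g ⬝ᵥ f g :=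
    Equiv.sum_comp (Equiv.addRight a) fun g => f g ⬝ᵥ f g
  simp only [two_smul, dotProduct_sub, sub_dotProduct, dotProduct_add, Finset.sum_sub_distrib,
    Finset.sum_add_distrib, dotProduct_comm (f (_ + a)) (f _), h₁, h₂]
  ring

section SupraLaplacian

variable {T N : ℕ} [NeZero T] (L : Matrix (Fin N) (Fin N) ℝ) (ω : ℝ)

lemma curry_supraLaplacian_mulVec (hT : 3 ≤ T) (x : Fin T × Fin N → ℝ) (t : Fin T) :
    Function.curry (blockCirc (L + (2 * ω) • 1) (-(ω • 1)) *ᵥ x) t =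
      L *ᵥ Function.curry x t +
        ω • (2 • Function.curry x t - Function.curry x (t + 1) - Function.curry x (t - 1)) := by
  rw [curry_blockCirc_mulVec hT]
  simp only [add_mulVec, neg_mulVec, smul_mulVec, one_mulVec]
  module

lemma dotProduct_supraLaplacian_mulVec (hT : 3 ≤ T) (x : Fin T × Fin N → ℝ) :
    x ⬝ᵥ blockCirc (L + (2 * ω) • 1) (-(ω • 1)) *ᵥ x =
      ∑ t, Function.curry x t ⬝ᵥ L *ᵥ Function.curry x t +
        ω * ∑ t, (Function.curry x t - Function.curry x (t + 1)) ⬝ᵥ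
          (Function.curry x t - Function.curry x (t + 1)) := by
  rw [← sum_dotProduct_two_smul_sub_sub, Finset.mul_sum, ← Finset.sum_add_distrib]
  refine (Fintype.sum_prod_type _).trans (Finset.sum_congr rfl fun t _ => ?_)
  change Function.curry x t ⬝ᵥ Function.curry (_ *ᵥ x) t = _
  rw [curry_supraLaplacian_mulVec L ω hT, dotProduct_add, dotProduct_smul, smul_eq_mul]

lemma isHermitian_supraLaplacian (hL : L.IsHermitian) :
    (blockCirc (T := T) (L + (2 * ω) • 1) (-(ω • 1))).IsHermitian := by
  rw [isHermitian_iff_isSymm] at hL ⊢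
  rw [IsSymm, blockCirc_transpose, transpose_add, transpose_neg, transpose_smul, transpose_smul,
    transpose_one, hL.eq]

lemma posSemidef_supraLaplacian (hT : 3 ≤ T) (hL : L.PosSemidef) (hω : 0 ≤ ω) :
    (blockCirc (T := T) (L + (2 * ω) • 1) (-(ω • 1))).PosSemidef := by
  refine .of_dotProduct_mulVec_nonneg (isHermitian_supraLaplacian L ω hL.1) fun x => ?_
  rw [star_trivial, dotProduct_supraLaplacian_mulVec L ω hT]
  have hLx : ∀ t, 0 ≤ Function.curry x t ⬝ᵥ L *ᵥ Function.curry x t := fun t => by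
    simpa using hL.dotProduct_mulVec_nonneg (Function.curry x t)
  exact add_nonneg (Finset.sum_nonneg fun t _ => hLx t)
    (mul_nonneg hω (Finset.sum_nonneg fun t _ => dotProduct_self_nonneg _))

lemma supraLaplacian_mulVec_eq_zero_iff (hT : 3 ≤ T) (hL : L.PosSemidef) (hω : 0 < ω)
    (x : Fin T × Fin N → ℝ) :
    blockCirc (L + (2 * ω) • 1) (-(ω • 1)) *ᵥ x = 0 ↔
      ∀ t, L *ᵥ Function.curry x t = 0 ∧ Function.curry x t = Function.curry x (t + 1) := by
  have hLx : ∀ t, 0 ≤ Function.curry x t ⬝ᵥ L *ᵥ Function.curry x t := fun t => by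
    simpa using hL.dotProduct_mulVec_nonneg (Function.curry x t)
  rw [← (posSemidef_supraLaplacian L ω hT hL hω.le).dotProduct_mulVec_zero_iff, star_trivial,
    dotProduct_supraLaplacian_mulVec L ω hT,
    add_eq_zero_iff_of_nonneg (Finset.sum_nonneg fun t _ => hLx t)
      (mul_nonneg hω.le (Finset.sum_nonneg fun t _ => dotProduct_self_nonneg _)),
    mul_eq_zero, or_iff_right hω.ne', Finset.sum_eq_zero_iff_of_nonneg fun t _ => hLx t,
    Finset.sum_eq_zero_iff_of_nonneg fun t _ => dotProduct_self_nonneg _]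
  have hLker : ∀ v, v ⬝ᵥ L *ᵥ v = 0 ↔ L *ᵥ v = 0 := by
    simpa using hL.dotProduct_mulVec_zero_iff
  simp only [Finset.mem_univ, true_implies, hLker, dotProduct_self_eq_zero, sub_eq_zero,
    forall_and]

lemma ker_supraLaplacian (hT : 3 ≤ T) (hL : L.PosSemidef) (hω : 0 < ω) :
    LinearMap.ker (toLin' (blockCirc (T := T) (L + (2 * ω) • 1) (-(ω • 1)))) =
      (LinearMap.ker (toLin' L)).map (LinearMap.funLeft ℝ ℝ Prod.snd) := by
  ext x
  rw [LinearMap.mem_ker, toLin'_apply, supraLaplacian_mulVec_eq_zero_iff L ω hT hL hω,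
    Submodule.mem_map]
  constructor
  · intro h
    have hconst := Fin.apply_eq_apply_zero_of_apply_add_one fun t => (h t).2
    refine ⟨Function.curry x 0, (h 0).1, funext fun p => ?_⟩
    exact (congrFun (hconst p.1) p.2).symm
  · rintro ⟨v, hv, rfl⟩ t
    exact ⟨hv, rfl⟩

end SupraLaplacian

theorem stmt12 {T N : ℕ} [NeZero T] (hT : 3 ≤ T)
    (L : Matrix (Fin N) (Fin N) ℝ) (hL : L.PosSemidef)
    (v0 : Fin N → ℝ) (hv0 : v0 ≠ 0)
    (hker : LinearMap.ker (Matrix.toLin' L) = Submodule.span ℝ {v0})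
    (ω : ℝ) (hω : 0 < ω)
    (Lsupra : Matrix (Fin T × Fin N) (Fin T × Fin N) ℝ)
    (hLsupra : Lsupra = blockCirc (T := T) (L + (2 * ω) • 1) (-(ω • 1)))
    (ψ0 : Fin T × Fin N → ℝ) (hψ0 : ∀ p, ψ0 p = v0 p.2) :
    Lsupra.PosSemidef ∧ Lsupra.mulVec ψ0 = 0 ∧ ψ0 ≠ 0 ∧
    LinearMap.ker (Matrix.toLin' Lsupra) = Submodule.span ℝ {ψ0} ∧
    Module.finrank ℝ (LinearMap.ker (Matrix.toLin' Lsupra)) = 1 := by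
  have hψ0ne : ψ0 ≠ 0 := fun h => hv0 (funext fun n => by simpa [hψ0] using congrFun h (0, n))
  have hkerSupra : LinearMap.ker (toLin' Lsupra) = Submodule.span ℝ {ψ0} := by
    have hψ0_eq : LinearMap.funLeft ℝ ℝ Prod.snd v0 = ψ0 := (funext hψ0).symm
    rw [hLsupra, ker_supraLaplacian L ω hT hL hω, hker, Submodule.map_span, Set.image_singleton,
      hψ0_eq]
  refine ⟨hLsupra ▸ posSemidef_supraLaplacian L ω hT hL hω.le, ?_, hψ0ne, hkerSupra,
    by rw [hkerSupra, finrank_span_singleton hψ0ne]⟩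
  rw [← toLin'_apply, ← LinearMap.mem_ker, hkerSupra]
  exact Submodule.mem_span_singleton_self _
end

section
/- Let L be symmetric PSD with simple eigenvalue 0 and spectral gap γ = λ₂(L) > 0 (second smallest eigenvalue), and let 𝓛' be the block circulant supra-Laplacian with diagonal blocks L + 2ωI and off-diagonal/corner blocks −ωI, ω > 0. If 4ω < γ, then the T smallest eigenvalues of 𝓛' are exactly {2ω(1 − cos(2πk/T)) : k = 0, ..., T−1} (with multiplicity), and all remaining eigenvalues are ≥ γ. -/
open Matrix Real

/-- The eigenvalues of a Hermitian real matrix, sorted in nondecreasing order: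
`sortedEig hM j` is the `j`-th smallest eigenvalue of `M` (counted with multiplicity). -/
noncomputable def sortedEig {n : ℕ} {M : Matrix (Fin n) (Fin n) ℝ} (hM : M.IsHermitian) :
    Fin n → ℝ :=
  hM.eigenvalues ∘ Tuple.sort hM.eigenvalues


open Polynomial Kronecker

section Aux

variable {R : Type*} [CommRing R] {n : Type*} [Fintype n] [DecidableEq n]

lemma charpoly_conj3 (P M Q : Matrix n n R) (h : P * Q = 1) :
    (P * M * Q).charpoly = M.charpoly := by
  have hmap : (P.map C) * (Q.map C) = 1 := by
    rw [← Matrix.map_mul, h, Matrix.map_one _ (map_zero C) (map_one C)]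
  have hcm : charmatrix (P * M * Q) = (P.map C) * charmatrix M * (Q.map C) := by
    unfold charmatrix
    simp only [RingHom.mapMatrix_apply]
    rw [Matrix.map_mul, Matrix.map_mul, Matrix.mul_sub, Matrix.sub_mul]
    congr 1
    rw [← (Matrix.scalar_commute (X : R[X]) (fun r => Commute.all _ _) (P.map C)).eq,
      mul_assoc, hmap, mul_one]
  unfold Matrix.charpoly
  rw [hcm, det_mul, det_mul, mul_right_comm, ← det_mul, hmap, det_one, one_mul]

lemma charpoly_diagonal' (d : n → R) :
    (Matrix.diagonal d).charpoly = ∏ i, (X - C (d i)) := by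
  have h : charmatrix (Matrix.diagonal d) = Matrix.diagonal (fun i => X - C (d i)) := by
    ext i j
    by_cases h : i = j
    · subst h; simp [charmatrix_apply_eq]
    · simp [charmatrix_apply_ne _ _ _ h, Matrix.diagonal_apply_ne _ h]
  rw [Matrix.charpoly, h, det_diagonal]

omit [DecidableEq n] in
lemma perm_map_univ {α : Type*} (σ : Equiv.Perm n) (f : n → α) :
    Multiset.map (fun i => f (σ i)) Finset.univ.val = Multiset.map f Finset.univ.val := by
  have h : Finset.univ.val.map σ = Finset.univ.val := by
    have h2 := Finset.map_univ_equiv σ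
    calc Finset.univ.val.map ⇑σ = (Finset.univ.map σ.toEmbedding).val := rfl
    _ = Finset.univ.val := by rw [h2]
  conv_rhs => rw [← h]
  rw [Multiset.map_map]
  rfl

lemma herm_charpoly {m : ℕ} {A : Matrix (Fin m) (Fin m) ℝ} (hA : A.IsHermitian) :
    A.charpoly = ((Finset.univ.val.map hA.eigenvalues).map (fun a => X - C a)).prod := by
  have hU : (hA.eigenvectorUnitary : Matrix (Fin m) (Fin m) ℝ) *
      star (hA.eigenvectorUnitary : Matrix (Fin m) (Fin m) ℝ) = 1 :=
    (Matrix.mem_unitaryGroup_iff).mp hA.eigenvectorUnitary.2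
  have h1 : A.charpoly = (Matrix.diagonal (RCLike.ofReal ∘ hA.eigenvalues) :
      Matrix (Fin m) (Fin m) ℝ).charpoly := by
    conv_lhs => rw [hA.spectral_theorem]
    exact charpoly_conj3 _ _ _ hU
  rw [h1, charpoly_diagonal']
  have h2 : ∀ i : Fin m, (RCLike.ofReal ∘ hA.eigenvalues) i = hA.eigenvalues i := by
    intro i; simp
  simp_rw [h2]
  rw [Multiset.map_map]
  rfl

lemma eig_multiset {m : ℕ} {A : Matrix (Fin m) (Fin m) ℝ} (hA : A.IsHermitian) :
    A.charpoly.roots = Multiset.map hA.eigenvalues Finset.univ.val := by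
  rw [herm_charpoly hA]
  exact roots_multiset_prod_X_sub_C _

def Cmat (T : ℕ) [NeZero T] (ω : ℝ) : Matrix (Fin T) (Fin T) ℝ :=
  fun p q => if p = q then 2 * ω else if q = p + 1 ∨ q = p - 1 then -ω else 0

variable {T : ℕ} [NeZero T]

lemma fin_ne_add_one (hT : 3 ≤ T) (p : Fin T) : p ≠ p + 1 := by
  intro h
  have h2 := left_eq_add.mp h
  have h3 := congrArg Fin.val h2
  rw [Fin.val_one', Nat.mod_eq_of_lt (show 1 < T by omega)] at h3
  exact absurd h3 one_ne_zero

lemma fin_ne_sub_one (hT : 3 ≤ T) (p : Fin T) : p ≠ p - 1 := by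
  intro h
  have h2 : p + 1 = p := by rw [eq_sub_iff_add_eq] at h; exact h
  exact fin_ne_add_one hT p h2.symm

lemma fin_add_ne_sub (hT : 3 ≤ T) (p : Fin T) : p + 1 ≠ p - 1 := by
  intro h
  rw [eq_sub_iff_add_eq] at h
  have h3 : p + (1 + 1) = p + 0 := by rw [← add_assoc, h, add_zero]
  have h4 := add_left_cancel h3
  have h2 : ((1 : Fin T) + 1).val = 0 := by rw [h4]; rfl
  rw [Fin.val_add, Fin.val_one', Nat.mod_eq_of_lt (show 1 < T by omega),
    Nat.mod_eq_of_lt (show 1 + 1 < T by omega)] at h2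
  exact absurd h2 (by norm_num)

lemma cmat_herm (ω : ℝ) : (Cmat T ω).IsHermitian := by
  ext p q
  simp only [conjTranspose_apply, Cmat, star_trivial]
  have hor : (p = q + 1 ∨ p = q - 1) ↔ (q = p + 1 ∨ q = p - 1) := by
    constructor
    · rintro (h | h)
      · right; rw [eq_sub_iff_add_eq]; exact h.symm
      · left; rw [eq_sub_iff_add_eq] at h; exact h.symm
    · rintro (h | h)
      · right; rw [eq_sub_iff_add_eq]; exact h.symm
      · left; rw [eq_sub_iff_add_eq] at h; exact h.symm
  by_cases h : q = p
  · simp [h]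
  · rw [if_neg h, if_neg (show ¬ p = q from fun hh => h hh.symm), if_congr hor rfl rfl]

section Circ
variable {T : ℕ} [NeZero T]

lemma cmat_eig_multiset (hT : 3 ≤ T) (ω : ℝ) :
    Multiset.map (cmat_herm (T := T) ω).eigenvalues Finset.univ.val =
    Multiset.map (fun k : Fin T => 2 * ω * (1 - Real.cos (2 * Real.pi * (k : ℕ) / T)))
      Finset.univ.val := by
  set c : Fin T → ℝ := fun k => 2 * ω * (1 - Real.cos (2 * Real.pi * (k : ℕ) / T)) with hc
  have hT0 : (T : ℕ) ≠ 0 := by omega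
  set ζ : ℂ := Complex.exp (2 * Real.pi * Complex.I / T) with hζ
  have hprim : IsPrimitiveRoot ζ T := Complex.isPrimitiveRoot_exp T hT0
  have hζT : ζ ^ T = 1 := hprim.pow_eq_one
  have hmod : ∀ m : ℕ, ζ ^ m = ζ ^ (m % T) := by
    intro m
    conv_lhs => rw [← Nat.div_add_mod m T]
    rw [pow_add, pow_mul, hζT, one_pow, one_mul]
  set x : Fin T → ℂ := fun k => ζ ^ (k : ℕ) with hx
  have hxinj : Function.Injective x := fun a b hab => Fin.ext (hprim.pow_inj a.isLt b.isLt hab)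
  set F : Matrix (Fin T) (Fin T) ℂ := (Matrix.vandermonde x)ᵀ with hF
  have hdetF : IsUnit F.det := by
    rw [hF, det_transpose]
    exact (Matrix.det_vandermonde_ne_zero_iff.mpr hxinj).isUnit
  have hζ0 : ζ ≠ 0 := Complex.exp_ne_zero _
  have hFapply : ∀ (p k : Fin T), F p k = ζ ^ ((k : ℕ) * (p : ℕ)) := by
    intro p k
    rw [hF, Matrix.transpose_apply, Matrix.vandermonde, hx]
    simp [← pow_mul]
  have hshift : ∀ (a k : Fin T), F (a + 1) k = ζ ^ (k : ℕ) * F a k := by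
    intro a k
    rw [hFapply, hFapply, ← pow_add]
    rw [hmod ((k : ℕ) * (((a + 1 : Fin T)) : ℕ)), hmod ((k : ℕ) + (k : ℕ) * (a : ℕ))]
    congr 1
    have hv : ((a + 1 : Fin T) : ℕ) = ((a : ℕ) + 1) % T := by
      rw [Fin.val_add, Fin.val_one', Nat.mod_eq_of_lt (show 1 < T by omega)]
    rw [hv]
    have h1 : (k : ℕ) * (((a : ℕ) + 1) % T) ≡ (k : ℕ) * ((a : ℕ) + 1) [MOD T] :=
      Nat.ModEq.mul_left _ (Nat.mod_modEq _ T)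
    have h2 : (k : ℕ) + (k : ℕ) * (a : ℕ) = (k : ℕ) * ((a : ℕ) + 1) := by ring
    rw [h2]
    exact h1
  have hD : ∀ (p k : Fin T),
      ((Cmat T ω).map Complex.ofReal * F) p k = F p k * ((c k : ℝ) : ℂ) := by
    intro p k
    have hzk : ζ ^ (k : ℕ) ≠ 0 := pow_ne_zero _ hζ0
    have hsub : F (p - 1) k = (ζ ^ (k : ℕ))⁻¹ * F p k := by
      have := hshift (p - 1) k
      rw [sub_add_cancel] at this
      rw [this, inv_mul_cancel_left₀ hzk]
    have hsplit : ∀ q : Fin T, ((Cmat T ω).map Complex.ofReal) p q * F q k =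
        (if p = q then ((2 * ω : ℝ) : ℂ) * F q k else 0) +
        ((if q = p + 1 then ((-ω : ℝ) : ℂ) * F q k else 0) +
         (if q = p - 1 then ((-ω : ℝ) : ℂ) * F q k else 0)) := by
      intro q
      simp only [Matrix.map_apply, Cmat, apply_ite Complex.ofReal]
      by_cases hpq : p = q
      · subst hpq
        rw [if_pos rfl, if_pos rfl, if_neg (fun hh => fin_ne_add_one hT p hh),
          if_neg (fun hh => fin_ne_sub_one hT p hh)]
        ring
      · rw [if_neg hpq, if_neg hpq]
        by_cases h1 : q = p + 1
        · rw [if_pos (Or.inl h1), if_pos h1, if_neg (fun hh => fin_add_ne_sub hT p (h1 ▸ hh))]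
          ring
        · by_cases h2 : q = p - 1
          · rw [if_pos (Or.inr h2), if_neg h1, if_pos h2]
            ring
          · rw [if_neg (by tauto), if_neg h1, if_neg h2]
            simp
    rw [Matrix.mul_apply]
    simp_rw [hsplit]
    rw [Finset.sum_add_distrib, Finset.sum_add_distrib, Finset.sum_ite_eq,
      Finset.sum_ite_eq', Finset.sum_ite_eq']
    simp only [Finset.mem_univ, if_true]
    rw [hshift p k, hsub]
    have hcos : ζ ^ (k : ℕ) = Complex.exp (((2 * Real.pi * (k : ℕ) / T : ℝ) : ℂ) * Complex.I) := by
      rw [hζ, ← Complex.exp_nat_mul]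
      congr 1
      push_cast
      ring
    have hsum : ((2 * ω : ℝ) : ℂ) + ((-ω : ℝ) : ℂ) * ζ ^ (k : ℕ)
        + ((-ω : ℝ) : ℂ) * (ζ ^ (k : ℕ))⁻¹ = ((c k : ℝ) : ℂ) := by
      rw [hcos, ← Complex.exp_neg]
      have h2c := Complex.two_cos (x := ((2 * Real.pi * (k : ℕ) / T : ℝ) : ℂ))
      rw [hc]
      push_cast [Complex.ofReal_cos] at h2c ⊢
      rw [neg_mul] at h2c
      linear_combination (ω : ℂ) * h2c
    push_cast at hsum ⊢
    linear_combination (F p k) * hsum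
  have hkey : (Cmat T ω).map Complex.ofReal * F
      = F * Matrix.diagonal (fun k => ((c k : ℝ) : ℂ)) := by
    ext p k
    rw [Matrix.mul_diagonal]
    exact hD p k
  have hconj : (Cmat T ω).map Complex.ofReal
      = F * Matrix.diagonal (fun k => ((c k : ℝ) : ℂ)) * F⁻¹ := by
    rw [← hkey, Matrix.mul_nonsing_inv_cancel_right _ _ hdetF]
  have hcp1 : ((Cmat T ω).map Complex.ofReal).charpoly
      = (Matrix.diagonal (fun k => ((c k : ℝ) : ℂ))).charpoly := by
    rw [hconj]
    exact charpoly_conj3 _ _ _ (Matrix.mul_nonsing_inv _ hdetF)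
  have hcp2 : ((Cmat T ω).map Complex.ofReal).charpoly
      = ((Cmat T ω).charpoly).map Complex.ofRealHom :=
    Matrix.charpoly_map (Cmat T ω) Complex.ofRealHom
  have hm : ((Cmat T ω).charpoly).map Complex.ofRealHom
      = ((Finset.univ.val.map (fun i => ((cmat_herm (T := T) ω).eigenvalues i : ℂ))).map
          (fun a => X - C a)).prod := by
    rw [herm_charpoly (cmat_herm (T := T) ω),
      show (Polynomial.map Complex.ofRealHom
          (((Finset.univ.val.map (cmat_herm (T := T) ω).eigenvalues).map
            (fun a => X - C a)).prod))
        = Polynomial.mapRingHom Complex.ofRealHom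
          (((Finset.univ.val.map (cmat_herm (T := T) ω).eigenvalues).map
            (fun a => X - C a)).prod) from rfl,
      map_multiset_prod, Multiset.map_map, Multiset.map_map]
    congr 1
    rw [Multiset.map_map]
    apply Multiset.map_congr rfl
    intro i _
    simp
  have hdiag : (Matrix.diagonal (fun k => ((c k : ℝ) : ℂ))).charpoly
      = ((Finset.univ.val.map (fun k : Fin T => ((c k : ℝ) : ℂ))).map
          (fun a => X - C a)).prod := by
    rw [charpoly_diagonal', Multiset.map_map]
    rfl
  have hroots : Finset.univ.val.map (fun i => ((cmat_herm (T := T) ω).eigenvalues i : ℂ))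
      = Finset.univ.val.map (fun k : Fin T => ((c k : ℝ) : ℂ)) := by
    have h := hm.symm.trans (hcp2.symm.trans (hcp1.trans hdiag))
    have h1 := congrArg Polynomial.roots h
    rwa [roots_multiset_prod_X_sub_C, roots_multiset_prod_X_sub_C] at h1
  have hfin : Multiset.map Complex.ofReal
        (Multiset.map (cmat_herm (T := T) ω).eigenvalues Finset.univ.val)
      = Multiset.map Complex.ofReal (Multiset.map c Finset.univ.val) := by
    rw [Multiset.map_map, Multiset.map_map]
    exact hroots
  exact Multiset.map_injective Complex.ofReal_injective hfin
end Circ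

lemma sorted_split {n T : ℕ} (hTn : T ≤ n) (s : Fin n → ℝ) (hs : Monotone s)
    (γ : ℝ) (S₂ : Multiset ℝ) (cc : Fin T → ℝ)
    (hcγ : ∀ k, cc k < γ) (h2 : ∀ x ∈ S₂, γ ≤ x)
    (hS : Multiset.map s Finset.univ.val = Multiset.map cc Finset.univ.val + S₂) :
    (Multiset.map (fun i : Fin T => s (Fin.castLE hTn i)) Finset.univ.val
      = Multiset.map cc Finset.univ.val) ∧ (∀ i : Fin n, T ≤ (i : ℕ) → γ ≤ s i) := by
  classical
  set A : Finset (Fin n) := Finset.univ.filter (fun i => s i < γ) with hA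
  have hcard : A.card = T := by
    have h1 : Multiset.countP (fun x => x < γ) (Multiset.map s Finset.univ.val)
        = A.card := by
      rw [Multiset.countP_map, Finset.card_def, hA, Finset.filter_val]
    have h3 : Multiset.countP (fun x => x < γ)
        (Multiset.map cc Finset.univ.val + S₂) = T := by
      rw [Multiset.countP_add]
      have e1 : Multiset.countP (fun x => x < γ) (Multiset.map cc Finset.univ.val)
          = Multiset.card (Multiset.map cc Finset.univ.val) := by
        rw [Multiset.countP_eq_card]
        intro a ha
        obtain ⟨k, -, rfl⟩ := Multiset.mem_map.mp ha
        exact hcγ k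
      have e2 : Multiset.countP (fun x => x < γ) S₂ = 0 := by
        rw [Multiset.countP_eq_zero]
        intro a ha
        exact not_lt.mpr (h2 a ha)
      rw [e1, e2, add_zero, Multiset.card_map]
      simp
    rw [hS, h3] at h1
    omega
  have hkey : ∀ i : Fin n, s i < γ ↔ (i : ℕ) < T := by
    intro i
    constructor
    · intro hi
      by_contra hge
      push_neg at hge
      have hsub : Finset.Iic i ⊆ A := by
        intro j hj
        simp only [Finset.mem_Iic] at hj
        simp only [hA, Finset.mem_filter, Finset.mem_univ, true_and]
        exact lt_of_le_of_lt (hs hj) hi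
      have hle := Finset.card_le_card hsub
      rw [Fin.card_Iic, hcard] at hle
      omega
    · intro hi
      by_contra hge
      push_neg at hge
      have hsub : A ⊆ Finset.Iio i := by
        intro j hj
        simp only [hA, Finset.mem_filter, Finset.mem_univ, true_and] at hj
        simp only [Finset.mem_Iio]
        by_contra hji
        push_neg at hji
        exact absurd (lt_of_le_of_lt (hge.trans (hs hji)) hj) (lt_irrefl _)
      have hle := Finset.card_le_card hsub
      rw [hcard, Fin.card_Iio] at hle
      omega
  refine ⟨?_, fun i hi => le_of_not_gt (fun hlt => by have := (hkey i).mp hlt; omega)⟩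
  have hApart : A = Finset.map ⟨fun k : Fin T => Fin.castLE hTn k,
      fun a b hab => by simpa [Fin.ext_iff] using hab⟩ Finset.univ := by
    ext i
    simp only [hA, Finset.mem_filter, Finset.mem_univ, true_and, Finset.mem_map,
      Function.Embedding.coeFn_mk]
    rw [hkey i]
    constructor
    · intro hi
      exact ⟨⟨(i : ℕ), hi⟩, Fin.ext rfl⟩
    · rintro ⟨k, rfl⟩
      exact k.isLt
  have hfilter : Multiset.filter (fun x => x < γ) (Multiset.map s Finset.univ.val)
      = Multiset.map (fun i : Fin T => s (Fin.castLE hTn i)) Finset.univ.val := by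
    rw [Multiset.filter_map]
    have e3 : Multiset.filter ((fun x => x < γ) ∘ s) Finset.univ.val = A.val := by
      rw [hA, Finset.filter_val]
      rfl
    rw [e3, hApart, Finset.map_val, Multiset.map_map]
    rfl
  have hfilter2 : Multiset.filter (fun x => x < γ) (Multiset.map cc Finset.univ.val + S₂)
      = Multiset.map cc Finset.univ.val := by
    rw [Multiset.filter_add]
    rw [Multiset.filter_eq_self.mpr (fun a ha => by
      obtain ⟨k, -, rfl⟩ := Multiset.mem_map.mp ha; exact hcγ k)]
    rw [Multiset.filter_eq_nil.mpr (fun a ha => not_lt.mpr (h2 a ha)), add_zero]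
  rw [← hfilter, hS, hfilter2]

open Kronecker


end Aux

theorem stmt17 {T N : ℕ} [NeZero T] (hT : 3 ≤ T) (hN : 2 ≤ N)
    (L : Matrix (Fin N) (Fin N) ℝ) (hL : L.PosSemidef)
    (hker : Module.finrank ℝ (LinearMap.ker (Matrix.toLin' L)) = 1)
    (γ : ℝ) (hLherm : L.IsHermitian) (hγ : γ = sortedEig hLherm ⟨1, by omega⟩)
    (hγpos : 0 < γ) (ω : ℝ) (hω : 0 < ω) (hgap : 4 * ω < γ)
    (Lsupra : Matrix (Fin (T * N)) (Fin (T * N)) ℝ)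
    (hLsupra : Lsupra = Matrix.reindex finProdFinEquiv finProdFinEquiv
      (blockCirc (T := T) (L + (2 * ω) • 1) (-(ω • 1))))
    (hH : Lsupra.IsHermitian) (hTN : T ≤ T * N) :
    (Multiset.map (fun k : Fin T => 2 * ω * (1 - Real.cos (2 * Real.pi * (k : ℕ) / T)))
        Finset.univ.val =
      Multiset.map (fun i : Fin T => sortedEig hH (Fin.castLE hTN i)) Finset.univ.val) ∧
    (∀ i : Fin (T * N), T ≤ (i : ℕ) → γ ≤ sortedEig hH i) := by
  haveI : NeZero N := ⟨by omega⟩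
  set c : Fin T → ℝ := fun k => 2 * ω * (1 - Real.cos (2 * Real.pi * (k : ℕ) / T)) with hcdef
  set eigC := (cmat_herm (T := T) ω).eigenvalues with heigCdef
  set eigL := hLherm.eigenvalues with heigLdef
  set σ := Tuple.sort hLherm.eigenvalues with hσdef
  set μ : Fin N → ℝ := sortedEig hLherm with hμdef
  -- basic facts about μ
  have hμmono : Monotone μ := Tuple.monotone_sort hLherm.eigenvalues
  have hμeig : ∀ j, μ j = eigL (σ j) := fun j => rfl
  have hdetL : L.det = 0 := by
    have hne : LinearMap.ker (Matrix.toLin' L) ≠ ⊥ := by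
      intro h
      rw [h] at hker
      simp at hker
    obtain ⟨v, hv, hv0⟩ := (Submodule.ne_bot_iff _).mp hne
    rw [← Matrix.exists_mulVec_eq_zero_iff]
    exact ⟨v, hv0, by rw [← Matrix.toLin'_apply]; exact hv⟩
  have hprod : ∏ i, eigL i = 0 := by
    have h := hLherm.det_eq_prod_eigenvalues
    rw [hdetL] at h
    exact_mod_cast h.symm
  have hμ0 : μ 0 = 0 := by
    obtain ⟨i, -, hi⟩ := Finset.prod_eq_zero_iff.mp hprod
    have h1 : μ (σ.symm i) = 0 := by rw [hμeig, Equiv.apply_symm_apply, hi]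
    have h2 : μ 0 ≤ 0 := h1 ▸ hμmono (by rw [Fin.le_def]; simp)
    have h3 : 0 ≤ μ 0 := hL.eigenvalues_nonneg (σ 0)
    linarith
  have hμγ : ∀ j : Fin N, j ≠ 0 → γ ≤ μ j := by
    intro j hj
    rw [hγ]
    apply hμmono
    rw [Fin.le_def]
    have hjv : (j : ℕ) ≠ 0 := by
      intro h
      exact hj (Fin.ext (by simpa using h))
    simpa using Nat.one_le_iff_ne_zero.mpr hjv
  -- facts about eigC and c
  have hc0 : ∀ k, 0 ≤ c k := by
    intro k
    have := Real.cos_le_one (2 * Real.pi * (k : ℕ) / T)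
    rw [hcdef]
    nlinarith
  have hcγ : ∀ k, c k < γ := by
    intro k
    have := Real.neg_one_le_cos (2 * Real.pi * (k : ℕ) / T)
    rw [hcdef]
    nlinarith
  have heigCmult : Multiset.map eigC Finset.univ.val = Multiset.map c Finset.univ.val :=
    cmat_eig_multiset hT ω
  have heigC : ∀ k, ∃ k', eigC k = c k' := by
    intro k
    have hmem : eigC k ∈ Multiset.map eigC Finset.univ.val :=
      Multiset.mem_map_of_mem _ (by simp)
    rw [heigCmult] at hmem
    obtain ⟨k', -, hk'⟩ := Multiset.mem_map.mp hmem
    exact ⟨k', hk'.symm⟩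
  have heigC0 : ∀ k, 0 ≤ eigC k := by
    intro k
    obtain ⟨k', hk'⟩ := heigC k
    rw [hk']
    exact hc0 k'
  -- Kronecker decomposition
  set P := (IsHermitian.eigenvectorUnitary (cmat_herm (T := T) ω) : Matrix (Fin T) (Fin T) ℝ)
    with hPdef
  set V := (IsHermitian.eigenvectorUnitary hLherm : Matrix (Fin N) (Fin N) ℝ) with hVdef
  have hPu : P * star P = 1 :=
    (Matrix.mem_unitaryGroup_iff).mp (IsHermitian.eigenvectorUnitary (cmat_herm (T := T) ω)).2
  have hVu : V * star V = 1 :=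
    (Matrix.mem_unitaryGroup_iff).mp (IsHermitian.eigenvectorUnitary hLherm).2
  set Dc : Matrix (Fin T) (Fin T) ℝ := Matrix.diagonal (RCLike.ofReal ∘ eigC) with hDcdef
  set Dl : Matrix (Fin N) (Fin N) ℝ := Matrix.diagonal (RCLike.ofReal ∘ eigL) with hDldef
  have hCspec : Cmat T ω = P * Dc * star P := (cmat_herm (T := T) ω).spectral_theorem
  have hLspec : L = V * Dl * star V := hLherm.spectral_theorem
  set B := blockCirc (T := T) (L + (2 * ω) • 1) (-(ω • 1)) with hBdef
  have hBC : B = Cmat T ω ⊗ₖ (1 : Matrix (Fin N) (Fin N) ℝ)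
      + (1 : Matrix (Fin T) (Fin T) ℝ) ⊗ₖ L := by
    ext p q
    simp only [hBdef, blockCirc, Cmat, Matrix.add_apply, Matrix.kroneckerMap_apply,
      Matrix.one_apply, Matrix.smul_apply, Matrix.neg_apply, smul_eq_mul, mul_one]
    by_cases h1 : p.1 = q.1
    · by_cases h2 : p.2 = q.2 <;> simp [h1, h2] <;> ring
    · by_cases h3 : q.1 = p.1 + 1 ∨ q.1 = p.1 - 1 <;>
        by_cases h2 : p.2 = q.2 <;> simp [h1, h2, h3]
  have h1k : Cmat T ω ⊗ₖ (1 : Matrix (Fin N) (Fin N) ℝ)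
      = (P ⊗ₖ V) * (Dc ⊗ₖ (1 : Matrix (Fin N) (Fin N) ℝ)) * (star P ⊗ₖ star V) := by
    rw [← Matrix.mul_kronecker_mul, ← Matrix.mul_kronecker_mul, mul_one, hVu, ← hCspec]
  have h2k : (1 : Matrix (Fin T) (Fin T) ℝ) ⊗ₖ L
      = (P ⊗ₖ V) * ((1 : Matrix (Fin T) (Fin T) ℝ) ⊗ₖ Dl) * (star P ⊗ₖ star V) := by
    rw [← Matrix.mul_kronecker_mul, ← Matrix.mul_kronecker_mul, mul_one, hPu, ← hLspec]
  set d : Fin T × Fin N → ℝ := fun pj => eigC pj.1 + eigL pj.2 with hddef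
  have hmid : Dc ⊗ₖ (1 : Matrix (Fin N) (Fin N) ℝ)
      + (1 : Matrix (Fin T) (Fin T) ℝ) ⊗ₖ Dl = Matrix.diagonal d := by
    rw [hDcdef, hDldef, show (1 : Matrix (Fin N) (Fin N) ℝ)
        = Matrix.diagonal (fun _ => (1:ℝ)) from (Matrix.diagonal_one).symm,
      show (1 : Matrix (Fin T) (Fin T) ℝ)
        = Matrix.diagonal (fun _ => (1:ℝ)) from (Matrix.diagonal_one).symm,
      Matrix.diagonal_kronecker_diagonal, Matrix.diagonal_kronecker_diagonal,
      Matrix.diagonal_add]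
    congr 1
    funext pj
    simp [hddef]
  have hBconj : B = (P ⊗ₖ V) * Matrix.diagonal d * (star P ⊗ₖ star V) := by
    rw [hBC, h1k, h2k, ← hmid, Matrix.mul_add, Matrix.add_mul]
  have hunit : (P ⊗ₖ V) * (star P ⊗ₖ star V) = 1 := by
    rw [← Matrix.mul_kronecker_mul, hPu, hVu, Matrix.one_kronecker_one]
  -- eigenvalue multiset of Lsupra
  have hcp : Lsupra.charpoly = (Matrix.diagonal d).charpoly := by
    rw [hLsupra, Matrix.charpoly_reindex, hBconj]
    exact charpoly_conj3 _ _ _ hunit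
  have hdroots : (Matrix.diagonal d).charpoly.roots = Multiset.map d Finset.univ.val := by
    rw [charpoly_diagonal', show (∏ i, (Polynomial.X - Polynomial.C (d i)))
      = ((Finset.univ.val.map d).map (fun a => Polynomial.X - Polynomial.C a)).prod by
        rw [Multiset.map_map]; rfl]
    exact Polynomial.roots_multiset_prod_X_sub_C _
  have hEig : Multiset.map hH.eigenvalues Finset.univ.val = Multiset.map d Finset.univ.val := by
    rw [← eig_multiset hH, hcp, hdroots]
  -- replace eigL by μ
  set d' : Fin T × Fin N → ℝ := fun pj => eigC pj.1 + μ pj.2 with hd'def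
  have hEig' : Multiset.map hH.eigenvalues Finset.univ.val
      = Multiset.map d' Finset.univ.val := by
    rw [hEig, ← perm_map_univ (Equiv.prodCongr (Equiv.refl (Fin T)) σ) d]
    apply Multiset.map_congr rfl
    intro pj _
    rfl
  -- split the product index set
  set S₂ : Multiset ℝ := Multiset.map d'
    (Finset.univ.filter (fun p : Fin T × Fin N => ¬ p.2 = 0)).val with hS₂def
  have hsplitidx : (Finset.univ : Finset (Fin T × Fin N)).val
      = (Finset.univ.filter (fun p : Fin T × Fin N => p.2 = 0)).val
        + (Finset.univ.filter (fun p : Fin T × Fin N => ¬ p.2 = 0)).val := by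
    rw [Finset.filter_val, Finset.filter_val, Multiset.filter_add_not]
  have hfirst : Multiset.map d'
      (Finset.univ.filter (fun p : Fin T × Fin N => p.2 = 0)).val
      = Multiset.map c Finset.univ.val := by
    have hmapfin : Finset.univ.filter (fun p : Fin T × Fin N => p.2 = 0)
        = Finset.map ⟨fun k : Fin T => (k, (0 : Fin N)),
            fun a b hab => by simpa [Prod.ext_iff] using hab⟩ Finset.univ := by
      ext ⟨k, j⟩
      simp [Prod.ext_iff, eq_comm]
      exact ⟨fun h => ⟨k, rfl, h⟩, fun ⟨a, _, h⟩ => h⟩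
    rw [hmapfin, Finset.map_val, Multiset.map_map, ← heigCmult]
    apply Multiset.map_congr rfl
    intro k _
    simp [hd'def, hμ0]
    change eigC k + μ 0 = eigC k
    rw [hμ0, add_zero]
  have hS : Multiset.map (sortedEig hH) Finset.univ.val
      = Multiset.map c Finset.univ.val + S₂ := by
    have hperm : Multiset.map (sortedEig hH) Finset.univ.val
        = Multiset.map hH.eigenvalues Finset.univ.val :=
      perm_map_univ (Tuple.sort hH.eigenvalues) hH.eigenvalues
    rw [hperm, hEig', hsplitidx, Multiset.map_add, hfirst, hS₂def]
  have h2 : ∀ x ∈ S₂, γ ≤ x := by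
    intro x hx
    rw [hS₂def] at hx
    obtain ⟨⟨k, j⟩, hmem, rfl⟩ := Multiset.mem_map.mp hx
    have hj : j ≠ 0 := by
      have := Finset.mem_filter.mp (by exact hmem)
      exact this.2
    have := hμγ j hj
    have := heigC0 k
    simp only [hd'def]
    linarith
  obtain ⟨hpart1, hpart2⟩ := sorted_split hTN (sortedEig hH)
    (Tuple.monotone_sort hH.eigenvalues) γ S₂ c hcγ h2 hS
  exact ⟨hpart1.symm, hpart2⟩
end
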